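/- For all natural numbers n ≥ 1 and r with 1 ≤ r ≤ n, ∫₀¹ ((H_n − H_{n−r}) + log(1 − x))² · x^{r−1}(1 − x)^{n−r} / B(r, n+1−r) dx = ∑_{k=n+1−r}^{n} 1/k², where B denotes the Beta function and H_m := ∑_{k=1}^{m} 1/k is the m-th harmonic number (H_0 := 0). -/

import Mathlib

/-- `harmonicR m = H_m = ∑_{k=1}^m 1/k`, with `H_0 = 0`. -/
noncomputable def harmonicR (m : ℕ) : ℝ := ∑ k ∈ Finset.range m, (1 : ℝ) / (k + 1)

/-- The Beta function at natural arguments: `B(a, b) = ∫₀¹ t^(a−1) (1−t)^(b−1) dt`. -/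
noncomputable def betaFn (a b : ℕ) : ℝ := ∫ t in (0 : ℝ)..1, t ^ (a - 1) * (1 - t) ^ (b - 1)

/-!
Write `r = a + 1`, `n = a + b + 1` and `M_j(a, b) = ∫₀¹ xᵃ (1 - x)ᵇ log (1 - x)ʲ dx`, so that the
weight is `xᵃ (1 - x)ᵇ / M_0(a, b)`. Integrating the derivative of `xᵖ (1 - x)^(q+1) log (1 - x)ʲ`
over `[0, 1]`, where the boundary terms vanish, relates the moments at `(p - 1, q + 1)` and
`(p, q)`; induction on `a` then gives
`M_1 = -(H_n - H_b) M_0` and `M_2 = ((H_n - H_b)² + ∑_{k=b+1}^{n} 1/k²) M_0`.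
Thus `H_n - H_b` is exactly the mean of `-log (1 - β)`, and the mean squared error is its
variance `∑_{k=b+1}^{n} 1/k²`.
-/

open Real Filter Set Topology MeasureTheory intervalIntegral

lemma abs_log_pow_le_rpow {u : ℝ} (hu₀ : 0 < u) (hu₁ : u ≤ 1) (j : ℕ) :
    |log u| ^ j ≤ (j + 1) ^ j * u ^ (-(j / (j + 1) : ℝ)) := by
  have hlog : |log u| * u ^ ((j + 1 : ℝ)⁻¹) ≤ j + 1 := by
    have := abs_log_mul_self_rpow_lt u (j + 1 : ℝ)⁻¹ hu₀ hu₁ (by positivity)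
    rw [abs_mul, abs_of_pos (rpow_pos_of_pos hu₀ _), one_div, inv_inv] at this
    exact this.le
  have hpow : (u ^ ((j + 1 : ℝ)⁻¹)) ^ j * u ^ (-(j / (j + 1) : ℝ)) = 1 := by
    rw [← rpow_natCast, ← rpow_mul hu₀.le, ← rpow_add hu₀]
    ring_nf
    exact rpow_zero u
  calc |log u| ^ j
      = (|log u| * u ^ ((j + 1 : ℝ)⁻¹)) ^ j * u ^ (-(j / (j + 1) : ℝ)) := by
        rw [mul_pow, mul_assoc, hpow, mul_one]
    _ ≤ (j + 1) ^ j * u ^ (-(j / (j + 1) : ℝ)) := by gcongr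

lemma intervalIntegrable_log_pow (j : ℕ) :
    IntervalIntegrable (fun u => log u ^ j) volume 0 1 := by
  have hdom : IntervalIntegrable (fun u : ℝ => (j + 1) ^ j * u ^ (-(j / (j + 1) : ℝ)))
      volume 0 1 := by
    refine (intervalIntegrable_rpow' ?_).const_mul _
    rw [neg_lt_neg_iff, div_lt_one (by positivity)]
    linarith
  refine hdom.mono_fun' (by fun_prop) ?_
  rw [EventuallyLE, ae_restrict_iff' (by measurability)]
  refine .of_forall fun u hu => ?_
  rw [uIoc_of_le zero_le_one] at hu
  rw [norm_pow, norm_eq_abs]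
  exact abs_log_pow_le_rpow hu.1 hu.2 j

lemma tendsto_pow_succ_mul_log_pow_nhdsGT_zero (q j : ℕ) :
    Tendsto (fun u => u ^ (q + 1) * log u ^ j) (𝓝[>] 0) (𝓝 0) := by
  set t : ℝ := (j + 1 : ℝ)⁻¹
  have hlim : Tendsto (fun u => u ^ q * u ^ t * (log u * u ^ t) ^ j) (𝓝[>] 0)
      (𝓝 (0 ^ q * 0 ^ t * 0 ^ j)) := by
    refine Tendsto.mul (Tendsto.mul ?_ ?_) ((tendsto_log_mul_rpow_nhdsGT_zero ?_).pow j)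
    · exact ((continuous_pow q).tendsto 0).mono_left nhdsWithin_le_nhds
    · exact ((continuousAt_rpow_const 0 t (.inr (by positivity))).tendsto).mono_left
        nhdsWithin_le_nhds
    · positivity
  rw [zero_rpow (by positivity), mul_zero, zero_mul] at hlim
  refine hlim.congr' (eventually_mem_nhdsWithin.mono fun u (hu : 0 < u) => ?_)
  have : u ^ t * (u ^ t) ^ j = u := by
    rw [← pow_succ']
    have h := rpow_inv_natCast_pow hu.le (Nat.succ_ne_zero j)
    push_cast at h
    exact h
  calc u ^ q * u ^ t * (log u * u ^ t) ^ j = u ^ q * (u ^ t * (u ^ t) ^ j) * log u ^ j := by ring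
    _ = u ^ (q + 1) * log u ^ j := by rw [this, pow_succ]

lemma tendsto_one_sub_nhdsLT_one : Tendsto (fun x : ℝ => 1 - x) (𝓝[<] 1) (𝓝[>] 0) := by
  refine tendsto_nhdsWithin_iff.2
    ⟨?_, eventually_nhdsWithin_of_forall fun x (hx : x < 1) => sub_pos.2 hx⟩
  have h : Tendsto (fun x : ℝ => 1 - x) (𝓝 1) (𝓝 (1 - 1)) := tendsto_const_nhds.sub tendsto_id
  rw [sub_self] at h
  exact h.mono_left nhdsWithin_le_nhds

noncomputable def logBetaMoment (p q j : ℕ) : ℝ :=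
  ∫ x in (0 : ℝ)..1, x ^ p * (1 - x) ^ q * log (1 - x) ^ j

lemma intervalIntegrable_pow_mul_one_sub_pow_mul_log_one_sub_pow (p q j : ℕ) :
    IntervalIntegrable (fun x => x ^ p * (1 - x) ^ q * log (1 - x) ^ j) volume 0 1 := by
  have hlog : IntervalIntegrable (fun x => log (1 - x) ^ j) volume 0 1 := by
    simpa using ((intervalIntegrable_log_pow j).comp_sub_left 1).symm
  exact hlog.continuousOn_mul (by fun_prop)

lemma logBetaMoment_recurrence (p q j : ℕ) (hpj : p ≠ 0 ∨ j ≠ 0) :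
    p * logBetaMoment (p - 1) (q + 1) j
      = (q + 1) * logBetaMoment p q j + j * logBetaMoment p q (j - 1) := by
  set F : ℝ → ℝ := fun x => x ^ p * (1 - x) ^ (q + 1) * log (1 - x) ^ j
  have hderiv : ∀ x ∈ Ioo (0 : ℝ) 1, HasDerivAt F
      (p * (x ^ (p - 1) * (1 - x) ^ (q + 1) * log (1 - x) ^ j)
        - (q + 1) * (x ^ p * (1 - x) ^ q * log (1 - x) ^ j)
        - j * (x ^ p * (1 - x) ^ q * log (1 - x) ^ (j - 1))) x := by
    intro x hx
    have hx₁ : 1 - x ≠ 0 := sub_ne_zero.2 hx.2.ne'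
    have hsub : HasDerivAt (fun y : ℝ => 1 - y) (-1) x := by
      simpa using (hasDerivAt_id x).const_sub 1
    have hpow := (hasDerivAt_pow (q + 1) (1 - x)).comp x hsub
    have hlog := ((hasDerivAt_log hx₁).comp x hsub).pow j
    refine (((hasDerivAt_pow p x).mul hpow).mul hlog).congr_deriv ?_
    simp only [Pi.mul_apply, Pi.pow_apply, Function.comp_apply, Nat.add_sub_cancel, pow_succ]
    push_cast
    field_simp
    ring
  have hF₀ : Tendsto F (𝓝[>] 0) (𝓝 0) := by
    have hcont : ContinuousAt F 0 := by
      have : (1 : ℝ) - 0 ≠ 0 := by norm_num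
      fun_prop (disch := assumption)
    have hF : F 0 = 0 := by rcases hpj with h | h <;> simp [F, h]
    simpa [hF] using hcont.tendsto.mono_left nhdsWithin_le_nhds
  have hF₁ : Tendsto F (𝓝[<] 1) (𝓝 0) := by
    have hpow : Tendsto (fun x : ℝ => x ^ p) (𝓝[<] 1) (𝓝 1) := by
      simpa using ((continuous_pow p).tendsto (1 : ℝ)).mono_left nhdsWithin_le_nhds
    simpa [F, mul_assoc] using
      hpow.mul ((tendsto_pow_succ_mul_log_pow_nhdsGT_zero q j).comp tendsto_one_sub_nhdsLT_one)
  have hint := intervalIntegrable_pow_mul_one_sub_pow_mul_log_one_sub_pow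
  have h₁ := (hint (p - 1) (q + 1) j).const_mul (p : ℝ)
  have h₂ := (hint p q j).const_mul ((q : ℝ) + 1)
  have h₃ := (hint p q (j - 1)).const_mul (j : ℝ)
  have hFTC := integral_eq_sub_of_hasDerivAt_of_tendsto zero_lt_one hderiv
    ((h₁.sub h₂).sub h₃) hF₀ hF₁
  rw [integral_sub (h₁.sub h₂) h₃, integral_sub h₁ h₂, intervalIntegral.integral_const_mul,
    intervalIntegral.integral_const_mul, intervalIntegral.integral_const_mul, sub_self] at hFTC
  simp only [logBetaMoment]
  linarith

lemma harmonicR_succ (m : ℕ) : harmonicR (m + 1) = harmonicR m + 1 / (m + 1) :=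
  Finset.sum_range_succ _ _

lemma logBetaMoment_pos (a b : ℕ) : 0 < logBetaMoment a b 0 := by
  refine intervalIntegral_pos_of_pos_on
    (intervalIntegrable_pow_mul_one_sub_pow_mul_log_one_sub_pow a b 0) (fun x hx => ?_) zero_lt_one
  have hx₀ : 0 < x := hx.1
  have hx₁ : 0 < 1 - x := sub_pos.2 hx.2
  positivity

lemma succ_mul_logBetaMoment_succ_right (a b : ℕ) :
    (a + 1) * logBetaMoment a (b + 1) 0 = (b + 1) * logBetaMoment (a + 1) b 0 := by
  simpa using logBetaMoment_recurrence (a + 1) b 0 (.inl a.succ_ne_zero)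

lemma logBetaMoment_one (a b : ℕ) :
    logBetaMoment a b 1 = (harmonicR b - harmonicR (a + b + 1)) * logBetaMoment a b 0 := by
  induction a generalizing b with
  | zero =>
    have h := logBetaMoment_recurrence 0 b 1 (.inr one_ne_zero)
    simp only [CharP.cast_eq_zero, zero_mul, Nat.cast_one, one_mul, Nat.sub_self] at h
    rw [zero_add, harmonicR_succ]
    field_simp
    linarith
  | succ a ih =>
    have h₁ := logBetaMoment_recurrence (a + 1) b 1 (.inl a.succ_ne_zero)
    simp only [Nat.add_sub_cancel, Nat.cast_add, Nat.cast_one, one_mul, Nat.sub_self] at h₁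
    have ih := ih (b + 1)
    rw [show a + (b + 1) + 1 = a + 1 + b + 1 by omega] at ih
    have hb : (b + 1 : ℝ) ≠ 0 := by positivity
    refine mul_left_cancel₀ hb ?_
    calc (b + 1) * logBetaMoment (a + 1) b 1
        = (a + 1) * logBetaMoment a (b + 1) 1 - logBetaMoment (a + 1) b 0 := by linarith
      _ = (harmonicR (b + 1) - harmonicR (a + 1 + b + 1)) * ((a + 1) * logBetaMoment a (b + 1) 0)
            - logBetaMoment (a + 1) b 0 := by rw [ih]; ring
      _ = (b + 1) * ((harmonicR b - harmonicR (a + 1 + b + 1)) * logBetaMoment (a + 1) b 0) := by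
        rw [succ_mul_logBetaMoment_succ_right, harmonicR_succ b]
        field_simp
        ring

lemma logBetaMoment_two (a b : ℕ) :
    logBetaMoment a b 2 = ((harmonicR b - harmonicR (a + b + 1)) ^ 2
      + ∑ k ∈ Finset.Icc (b + 1) (a + b + 1), 1 / (k : ℝ) ^ 2) * logBetaMoment a b 0 := by
  have hb : ∀ b : ℕ, (b + 1 : ℝ) ≠ 0 := fun b => by positivity
  induction a generalizing b with
  | zero =>
    have h₂ := logBetaMoment_recurrence 0 b 2 (.inr two_ne_zero)
    simp only [CharP.cast_eq_zero, zero_mul, Nat.cast_ofNat, Nat.add_one_sub_one] at h₂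
    rw [zero_add, Finset.Icc_self, Finset.sum_singleton, harmonicR_succ]
    refine mul_left_cancel₀ (hb b) ?_
    calc (b + 1) * logBetaMoment 0 b 2 = -2 * logBetaMoment 0 b 1 := by linarith
      _ = _ := by
        rw [logBetaMoment_one, zero_add, harmonicR_succ]
        field_simp
        push_cast
        ring
  | succ a ih =>
    have h₂ := logBetaMoment_recurrence (a + 1) b 2 (.inl a.succ_ne_zero)
    simp only [Nat.cast_add, Nat.cast_one, Nat.cast_ofNat, Nat.add_one_sub_one] at h₂
    have ih := ih (b + 1)
    rw [show a + (b + 1) + 1 = a + 1 + b + 1 by omega] at ih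
    have hsum : ∑ k ∈ Finset.Icc (b + 1) (a + 1 + b + 1), 1 / (k : ℝ) ^ 2
        = 1 / (b + 1 : ℝ) ^ 2 + ∑ k ∈ Finset.Icc (b + 1 + 1) (a + 1 + b + 1), 1 / (k : ℝ) ^ 2 := by
      rw [← Finset.insert_Icc_add_one_left_eq_Icc (by omega), Finset.sum_insert (by simp)]
      push_cast
      rfl
    refine mul_left_cancel₀ (hb b) ?_
    rw [hsum]
    calc (b + 1) * logBetaMoment (a + 1) b 2
        = (a + 1) * logBetaMoment a (b + 1) 2 - 2 * logBetaMoment (a + 1) b 1 := by linarith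
      _ = ((harmonicR (b + 1) - harmonicR (a + 1 + b + 1)) ^ 2
              + ∑ k ∈ Finset.Icc (b + 1 + 1) (a + 1 + b + 1), 1 / (k : ℝ) ^ 2)
            * ((a + 1) * logBetaMoment a (b + 1) 0) - 2 * logBetaMoment (a + 1) b 1 := by
        rw [ih]; ring
      _ = _ := by
        rw [succ_mul_logBetaMoment_succ_right, logBetaMoment_one, harmonicR_succ b]
        field_simp
        ring

lemma integral_add_log_one_sub_sq_mul (c : ℝ) (a b : ℕ) :
    ∫ x in (0 : ℝ)..1, (c + log (1 - x)) ^ 2 * (x ^ a * (1 - x) ^ b)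
      = c ^ 2 * logBetaMoment a b 0 + 2 * c * logBetaMoment a b 1 + logBetaMoment a b 2 := by
  have hint := intervalIntegrable_pow_mul_one_sub_pow_mul_log_one_sub_pow a b
  have hexpand : (fun x : ℝ => (c + log (1 - x)) ^ 2 * (x ^ a * (1 - x) ^ b))
      = fun x => c ^ 2 * (x ^ a * (1 - x) ^ b * log (1 - x) ^ 0)
        + 2 * c * (x ^ a * (1 - x) ^ b * log (1 - x) ^ 1)
        + x ^ a * (1 - x) ^ b * log (1 - x) ^ 2 := by
    funext x
    ring
  rw [hexpand, integral_add (((hint 0).const_mul _).add ((hint 1).const_mul _)) (hint 2),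
    integral_add ((hint 0).const_mul _) ((hint 1).const_mul _),
    intervalIntegral.integral_const_mul, intervalIntegral.integral_const_mul]
  rfl

theorem mse_alpha_hat_general (n r : ℕ) (hr1 : 1 ≤ r) (hrn : r ≤ n) :
    ∫ x in (0 : ℝ)..1,
        ((harmonicR n - harmonicR (n - r)) + Real.log (1 - x)) ^ 2 *
          (x ^ (r - 1) * (1 - x) ^ (n - r) / betaFn r (n + 1 - r))
      = ∑ k ∈ Finset.Icc (n + 1 - r) n, (1 : ℝ) / (k : ℝ) ^ 2 := by
  obtain ⟨a, rfl⟩ : ∃ a, r = a + 1 := ⟨r - 1, by omega⟩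
  obtain ⟨b, rfl⟩ : ∃ b, n = a + b + 1 := ⟨n - (a + 1), by omega⟩
  rw [show a + b + 1 - (a + 1) = b by omega, show a + b + 1 + 1 - (a + 1) = b + 1 by omega,
    Nat.add_sub_cancel]
  have hbeta : betaFn (a + 1) (b + 1) = logBetaMoment a b 0 := by
    simp [betaFn, logBetaMoment]
  have hM₀ := (logBetaMoment_pos a b).ne'
  simp_rw [hbeta, mul_div_assoc']
  rw [intervalIntegral.integral_div, integral_add_log_one_sub_sq_mul, logBetaMoment_one,
    logBetaMoment_two]
  field_simp
  ring

/-- **MSE of α̂.** The mean squared error of the plug-in AURC weight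
`α̂ = H_n − H_{n−r}` under `β ∼ Beta(r, n+1−r)` equals `∑_{k=n+1−r}^{n} 1/k²`. -/
theorem mse_alpha_hat (n r : ℕ) (hn : 1 ≤ n) (hr1 : 1 ≤ r) (hrn : r ≤ n) :
    ∫ x in (0 : ℝ)..1,
        ((harmonicR n - harmonicR (n - r)) + Real.log (1 - x)) ^ 2 *
          (x ^ (r - 1) * (1 - x) ^ (n - r) / betaFn r (n + 1 - r))
      = ∑ k ∈ Finset.Icc (n + 1 - r) n, (1 : ℝ) / (k : ℝ) ^ 2 :=
  mse_alpha_hat_general n r hr1 hrn
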